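/- Let p be a prime, k an algebraically closed field of characteristic p, and consider the restriction to U(Z_p) = {(1 b; 0 1) : b ∈ Z_p} of the smooth induced representation Ind_{K₀(p)}^{GL₂(Z_p)}(χ_rˢ) of a character χ_rˢ of K₀(p). Then this restriction decomposes as ρ ⊕ 1, where 1 is the trivial character and ρ is a p-dimensional uniserial representation of U(Z_p) (i.e. its submodules form a chain). -/
import Mathlib


/-- The unipotent upper triangular matrix `(1 b; 0 1)` as an element of `GL₂(ℤ_p)`. -/
noncomputable def uZ (p : ℕ) [Fact p.Prime] (b : ℤ_[p]) : GL (Fin 2) ℤ_[p] :=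
  ⟨!![1, b; 0, 1], !![1, -b; 0, 1],
    by rw [Matrix.mul_fin_two]; norm_num; exact (Matrix.one_fin_two).symm,
    by rw [Matrix.mul_fin_two]; norm_num; exact (Matrix.one_fin_two).symm⟩

/-- The smooth induction `Ind_{K₀(p)}^{GL₂(ℤ_p)}(χ_rˢ)`: functions `f : GL₂(ℤ_p) → k` with
`f(hg) = χ_rˢ(h)·f(g)` for `h ∈ K₀(p)`, where `χ_rˢ((a b; pc d)) = (d mod p)^r`. -/
noncomputable def IndK0 (p : ℕ) [Fact p.Prime] (k : Type) [Field k] [CharP k p] (r : ℕ) :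
    Submodule k (GL (Fin 2) ℤ_[p] → k) where
  carrier := {f | ∀ h g : GL (Fin 2) ℤ_[p],
    (∃ c : ℤ_[p], (h : Matrix (Fin 2) (Fin 2) ℤ_[p]) 1 0 = (p : ℤ_[p]) * c) →
      f (h * g) = (ZMod.castHom (dvd_refl p) k
        (PadicInt.toZMod ((h : Matrix (Fin 2) (Fin 2) ℤ_[p]) 1 1))) ^ r * f g}
  add_mem' := by
    intro f₁ f₂ h₁ h₂ h g hh
    simp only [Pi.add_apply, h₁ h g hh, h₂ h g hh]; ring
  zero_mem' := by intro h g hh; simp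
  smul_mem' := by
    intro c f hf h g hh
    simp only [Pi.smul_apply, hf h g hh, smul_eq_mul]; ring

open Matrix Module

set_option linter.unusedSectionVars false

variable (p : ℕ) [Fact p.Prime]

noncomputable abbrev res : ℤ_[p] →+* ZMod p := PadicInt.toZMod

noncomputable def wU : GL (Fin 2) ℤ_[p] :=
  ⟨!![0, 1; 1, 0], !![0, 1; 1, 0],
    by rw [Matrix.mul_fin_two]; norm_num; exact (Matrix.one_fin_two).symm,
    by rw [Matrix.mul_fin_two]; norm_num; exact (Matrix.one_fin_two).symm⟩

noncomputable def lowU (t : ℤ_[p]) : GL (Fin 2) ℤ_[p] :=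
  ⟨!![1, 0; t, 1], !![1, 0; -t, 1],
    by rw [Matrix.mul_fin_two]; norm_num; exact (Matrix.one_fin_two).symm,
    by rw [Matrix.mul_fin_two]; norm_num; exact (Matrix.one_fin_two).symm⟩

lemma res_eq_zero_iff (x : ℤ_[p]) : res p x = 0 ↔ ∃ c, x = (p : ℤ_[p]) * c := by
  rw [show (res p x = 0) ↔ x ∈ RingHom.ker (res p) from (RingHom.mem_ker (f := res p)).symm,
    PadicInt.ker_toZMod, PadicInt.maximalIdeal_eq_span_p, Ideal.mem_span_singleton]
  exact dvd_def

lemma isUnit_of_res_ne_zero {x : ℤ_[p]} (h : res p x ≠ 0) : IsUnit x := by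
  by_contra hx
  exact h (by
    have : x ∈ IsLocalRing.maximalIdeal ℤ_[p] := hx
    rwa [← PadicInt.ker_toZMod, RingHom.mem_ker] at this)

lemma res_d_ne_zero (h : GL (Fin 2) ℤ_[p])
    (hh : res p ((h : Matrix (Fin 2) (Fin 2) ℤ_[p]) 1 0) = 0) :
    res p ((h : Matrix (Fin 2) (Fin 2) ℤ_[p]) 1 1) ≠ 0 := by
  have hd : IsUnit (res p ((h : Matrix (Fin 2) (Fin 2) ℤ_[p]).det)) :=
    (((Matrix.isUnit_iff_isUnit_det _).1 h.isUnit).map (res p))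
  rw [Matrix.det_fin_two, map_sub] at hd
  intro h0
  rw [_root_.map_mul, _root_.map_mul, hh, h0, mul_zero, mul_zero, sub_zero] at hd
  exact hd.ne_zero rfl

variable (k : Type) [Field k] [CharP k p] (r : ℕ)

noncomputable abbrev φk : ZMod p →+* k := ZMod.castHom (dvd_refl p) k

lemma mem_IndK0_iff (f : GL (Fin 2) ℤ_[p] → k) :
    f ∈ IndK0 p k r ↔ ∀ h g : GL (Fin 2) ℤ_[p],
      res p ((h : Matrix (Fin 2) (Fin 2) ℤ_[p]) 1 0) = 0 →
      f (h * g) = (φk p k (res p ((h : Matrix (Fin 2) (Fin 2) ℤ_[p]) 1 1))) ^ r * f g := by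
  constructor
  · intro hf h g hh; exact hf h g ((res_eq_zero_iff p _).1 hh)
  · intro hf h g hh; exact hf h g ((res_eq_zero_iff p _).2 hh)

lemma val_mul_entry (h g : GL (Fin 2) ℤ_[p]) (i j : Fin 2) :
    ((h * g : GL (Fin 2) ℤ_[p]) : Matrix (Fin 2) (Fin 2) ℤ_[p]) i j
      = (h : Matrix (Fin 2) (Fin 2) ℤ_[p]) i 0 * (g : Matrix (Fin 2) (Fin 2) ℤ_[p]) 0 j
        + (h : Matrix (Fin 2) (Fin 2) ℤ_[p]) i 1 * (g : Matrix (Fin 2) (Fin 2) ℤ_[p]) 1 j := by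
  simp [Units.val_mul, Matrix.mul_apply, Fin.sum_univ_two]

-- entry values
lemma uZ_entries (b : ℤ_[p]) :
    ((uZ p b : GL (Fin 2) ℤ_[p]) : Matrix (Fin 2) (Fin 2) ℤ_[p]) 1 0 = 0 ∧
    ((uZ p b : GL (Fin 2) ℤ_[p]) : Matrix (Fin 2) (Fin 2) ℤ_[p]) 1 1 = 1 := by
  constructor <;> simp [uZ]

lemma lowU_entries (t : ℤ_[p]) :
    ((lowU p t : GL (Fin 2) ℤ_[p]) : Matrix (Fin 2) (Fin 2) ℤ_[p]) 1 0 = t ∧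
    ((lowU p t : GL (Fin 2) ℤ_[p]) : Matrix (Fin 2) (Fin 2) ℤ_[p]) 1 1 = 1 := by
  constructor <;> simp [lowU]

lemma wu_entries (b : ℤ_[p]) :
    ((wU p * uZ p b : GL (Fin 2) ℤ_[p]) : Matrix (Fin 2) (Fin 2) ℤ_[p]) 1 0 = 1 ∧
    ((wU p * uZ p b : GL (Fin 2) ℤ_[p]) : Matrix (Fin 2) (Fin 2) ℤ_[p]) 1 1 = b := by
  rw [val_mul_entry, val_mul_entry]
  simp [wU, uZ]

lemma uZ_mul (a b : ℤ_[p]) : uZ p a * uZ p b = uZ p (a + b) := by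
  ext : 1
  show (!![1,a;0,1] : Matrix (Fin 2) (Fin 2) ℤ_[p]) * !![1,b;0,1] = _
  rw [Matrix.mul_fin_two]; norm_num [uZ]; ring

lemma lowU_mul_wu (t b : ℤ_[p]) : lowU p t * (wU p * uZ p b) = wU p * uZ p (t + b) := by
  ext : 1
  show (!![1,0;t,1] : Matrix (Fin 2) (Fin 2) ℤ_[p]) * (!![0,1;1,0] * !![1,b;0,1])
      = !![0,1;1,0] * !![1,t+b;0,1]
  simp [Matrix.mul_fin_two]

lemma res_invariance {f : GL (Fin 2) ℤ_[p] → k} (hf : f ∈ IndK0 p k r) {b₁ b₂ : ℤ_[p]}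
    (hb : res p b₁ = res p b₂) : f (wU p * uZ p b₁) = f (wU p * uZ p b₂) := by
  have h1 : res p (b₁ - b₂) = 0 := by rw [map_sub, hb, sub_self]
  have h2 : wU p * uZ p b₁ = lowU p (b₁ - b₂) * (wU p * uZ p b₂) := by
    rw [lowU_mul_wu, sub_add_cancel]
  rw [h2, (mem_IndK0_iff p k r f).1 hf _ _ (by rw [(lowU_entries p _).1]; exact h1),
    (lowU_entries p _).2]
  simp

lemma bruhat {f : GL (Fin 2) ℤ_[p] → k} (hf : f ∈ IndK0 p k r) (g : GL (Fin 2) ℤ_[p])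
    (hg : res p ((g : Matrix (Fin 2) (Fin 2) ℤ_[p]) 1 0) ≠ 0) :
    ∃ b : ℤ_[p], res p b = res p ((g : Matrix (Fin 2) (Fin 2) ℤ_[p]) 1 1)
        * (res p ((g : Matrix (Fin 2) (Fin 2) ℤ_[p]) 1 0))⁻¹ ∧
      f g = (φk p k (res p ((g : Matrix (Fin 2) (Fin 2) ℤ_[p]) 1 0))) ^ r
        * f (wU p * uZ p b) := by
  obtain ⟨u, hu⟩ := isUnit_of_res_ne_zero p hg
  set g10 := (g : Matrix (Fin 2) (Fin 2) ℤ_[p]) 1 0 with hg10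
  set g11 := (g : Matrix (Fin 2) (Fin 2) ℤ_[p]) 1 1 with hg11
  have huv : g10 * (↑u⁻¹ : ℤ_[p]) = 1 := by rw [← hu]; exact u.mul_inv
  set b := g11 * (↑u⁻¹ : ℤ_[p]) with hb
  set h := g * (wU p * uZ p b)⁻¹ with hh
  have hmain : h * (wU p * uZ p b) = g := by rw [hh, inv_mul_cancel_right]
  have hval : (h : Matrix (Fin 2) (Fin 2) ℤ_[p])
      = (g : Matrix (Fin 2) (Fin 2) ℤ_[p]) * (!![1,-b;0,1] * !![0,1;1,0]) := by
    rw [hh]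
    show (g : Matrix (Fin 2) (Fin 2) ℤ_[p]) * ((wU p * uZ p b)⁻¹ :
        GL (Fin 2) ℤ_[p]).val = _
    congr 1
  have h10 : (h : Matrix (Fin 2) (Fin 2) ℤ_[p]) 1 0 = 0 := by
    rw [hval, Matrix.mul_fin_two, Matrix.mul_apply, Fin.sum_univ_two]
    show g10 * (1 * 0 + -b * 1) + g11 * (0 * 0 + 1 * 1) = 0
    rw [hb]; linear_combination (-g11) * huv
  have h11 : (h : Matrix (Fin 2) (Fin 2) ℤ_[p]) 1 1 = g10 := by
    rw [hval, Matrix.mul_fin_two, Matrix.mul_apply, Fin.sum_univ_two]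
    show g10 * (1 * 1 + -b * 0) + g11 * (0 * 1 + 1 * 0) = g10
    ring
  refine ⟨b, ?_, ?_⟩
  · have : res p g10 * res p (↑u⁻¹ : ℤ_[p]) = 1 := by rw [← _root_.map_mul, huv, (res p).map_one]
    rw [hb, _root_.map_mul, eq_comm, mul_comm (res p g11)]
    rw [inv_eq_of_mul_eq_one_right this] at *
    ring
  · conv_lhs => rw [← hmain]
    rw [(mem_IndK0_iff p k r f).1 hf _ _ (by rw [h10]; exact (by rw [map_zero]) )]
    rw [h11]

lemma res_mul (h g : GL (Fin 2) ℤ_[p])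
    (hh : res p ((h : Matrix (Fin 2) (Fin 2) ℤ_[p]) 1 0) = 0) (j : Fin 2) :
    res p (((h * g : GL (Fin 2) ℤ_[p]) : Matrix (Fin 2) (Fin 2) ℤ_[p]) 1 j)
      = res p ((h : Matrix (Fin 2) (Fin 2) ℤ_[p]) 1 1)
        * res p ((g : Matrix (Fin 2) (Fin 2) ℤ_[p]) 1 j) := by
  rw [val_mul_entry, map_add, _root_.map_mul, _root_.map_mul, hh, zero_mul, zero_add]

noncomputable def f0 : GL (Fin 2) ℤ_[p] → k :=
  fun g => if res p ((g : Matrix (Fin 2) (Fin 2) ℤ_[p]) 1 0) = 0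
    then (φk p k (res p ((g : Matrix (Fin 2) (Fin 2) ℤ_[p]) 1 1))) ^ r else 0

lemma f0_mem : f0 p k r ∈ IndK0 p k r := by
  rw [mem_IndK0_iff]
  intro h g hh
  unfold f0
  rw [res_mul p h g hh 0, res_mul p h g hh 1]
  by_cases hg : res p ((g : Matrix (Fin 2) (Fin 2) ℤ_[p]) 1 0) = 0
  · rw [if_pos (by rw [hg, mul_zero]), if_pos hg, _root_.map_mul, mul_pow]
  · rw [if_neg (mul_ne_zero (res_d_ne_zero p h hh) hg), if_neg hg, mul_zero]

lemma f0_transl (b : ℤ_[p]) : (fun x => f0 p k r (x * uZ p b)) = f0 p k r := by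
  funext g
  have e0 : ((g * uZ p b : GL (Fin 2) ℤ_[p]) : Matrix (Fin 2) (Fin 2) ℤ_[p]) 1 0
      = (g : Matrix (Fin 2) (Fin 2) ℤ_[p]) 1 0 := by
    rw [val_mul_entry]; simp [uZ]
  have e1 : ((g * uZ p b : GL (Fin 2) ℤ_[p]) : Matrix (Fin 2) (Fin 2) ℤ_[p]) 1 1
      = (g : Matrix (Fin 2) (Fin 2) ℤ_[p]) 1 0 * b + (g : Matrix (Fin 2) (Fin 2) ℤ_[p]) 1 1 := by
    rw [val_mul_entry]; simp [uZ]
  show f0 p k r (g * uZ p b) = f0 p k r g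
  unfold f0
  rw [e0, e1]
  by_cases hg : res p ((g : Matrix (Fin 2) (Fin 2) ℤ_[p]) 1 0) = 0
  · rw [if_pos hg, if_pos hg, map_add, _root_.map_mul, hg, zero_mul, zero_add]
  · rw [if_neg hg, if_neg hg]

lemma f0_one : f0 p k r 1 = 1 := by
  unfold f0
  have h0 : ((1 : GL (Fin 2) ℤ_[p]) : Matrix (Fin 2) (Fin 2) ℤ_[p]) 1 0 = 0 :=
    Matrix.one_apply_ne (by decide)
  have h1 : ((1 : GL (Fin 2) ℤ_[p]) : Matrix (Fin 2) (Fin 2) ℤ_[p]) 1 1 = 1 :=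
    Matrix.one_apply_eq 1
  rw [h0, h1, map_zero, if_pos rfl, (res p).map_one, (φk p k).map_one, one_pow]

noncomputable def Ff (c : ZMod p → k) : GL (Fin 2) ℤ_[p] → k :=
  fun g => if res p ((g : Matrix (Fin 2) (Fin 2) ℤ_[p]) 1 0) = 0 then 0
    else (φk p k (res p ((g : Matrix (Fin 2) (Fin 2) ℤ_[p]) 1 0))) ^ r
      * c (res p ((g : Matrix (Fin 2) (Fin 2) ℤ_[p]) 1 1)
          * (res p ((g : Matrix (Fin 2) (Fin 2) ℤ_[p]) 1 0))⁻¹)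

lemma Ff_mem (c : ZMod p → k) : Ff p k r c ∈ IndK0 p k r := by
  rw [mem_IndK0_iff]
  intro h g hh
  unfold Ff
  rw [res_mul p h g hh 0, res_mul p h g hh 1]
  by_cases hg : res p ((g : Matrix (Fin 2) (Fin 2) ℤ_[p]) 1 0) = 0
  · rw [if_pos (by rw [hg, mul_zero]), if_pos hg, mul_zero]
  · have hd := res_d_ne_zero p h hh
    rw [if_neg (mul_ne_zero hd hg), if_neg hg, mul_inv,
      mul_mul_mul_comm, mul_inv_cancel₀ hd, one_mul, _root_.map_mul, mul_pow, mul_assoc]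

lemma Ff_one (c : ZMod p → k) : Ff p k r c 1 = 0 := by
  unfold Ff
  rw [if_pos (by
    rw [show ((1 : GL (Fin 2) ℤ_[p]) : Matrix (Fin 2) (Fin 2) ℤ_[p]) 1 0 = 0 from
      Matrix.one_apply_ne (by decide), map_zero])]

lemma res_natlift (i : ZMod p) : res p ((i.val : ℕ) : ℤ_[p]) = i := by
  haveI : NeZero p := ⟨(Fact.out : p.Prime).ne_zero⟩
  rw [map_natCast]
  exact ZMod.natCast_rightInverse i

noncomputable def Psi : (GL (Fin 2) ℤ_[p] → k) →ₗ[k] (ZMod p → k) where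
  toFun f := fun i => f (wU p * uZ p ((i.val : ℕ) : ℤ_[p]))
  map_add' _ _ := rfl
  map_smul' _ _ := rfl

lemma Psi_Ff (c : ZMod p → k) : Psi p k (Ff p k r c) = c := by
  funext i
  show Ff p k r c (wU p * uZ p ((i.val : ℕ) : ℤ_[p])) = c i
  unfold Ff
  rw [(wu_entries p _).1, (wu_entries p _).2, (res p).map_one,
    if_neg one_ne_zero, (φk p k).map_one, one_pow, one_mul, inv_one, mul_one, res_natlift]

lemma eq_zero_of_psi (f : GL (Fin 2) ℤ_[p] → k) (hf : f ∈ IndK0 p k r) (h1 : f 1 = 0)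
    (hv : ∀ i : ZMod p, f (wU p * uZ p ((i.val : ℕ) : ℤ_[p])) = 0) : f = 0 := by
  funext g
  show f g = 0
  by_cases hg : res p ((g : Matrix (Fin 2) (Fin 2) ℤ_[p]) 1 0) = 0
  · have := (mem_IndK0_iff p k r f).1 hf g 1 hg
    rw [mul_one] at this
    rw [this, h1, mul_zero]
  · obtain ⟨b, _, hfb⟩ := bruhat p k r hf g hg
    have hres : f (wU p * uZ p b) = f (wU p * uZ p (((res p b).val : ℕ) : ℤ_[p])) :=
      res_invariance p k r hf (by rw [res_natlift])
    rw [hfb, hres, hv, mul_zero]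

lemma Psi_transl (f : GL (Fin 2) ℤ_[p] → k) (hf : f ∈ IndK0 p k r) (b : ℤ_[p]) :
    Psi p k (fun x => f (x * uZ p b)) = fun i => Psi p k f (i + res p b) := by
  funext i
  show f (wU p * uZ p ((i.val : ℕ) : ℤ_[p]) * uZ p b) = _
  rw [mul_assoc, uZ_mul]
  exact res_invariance p k r hf (by rw [map_add, res_natlift, res_natlift])

section Shift

instance : NeZero p := ⟨(Fact.out : p.Prime).ne_zero⟩

noncomputable def Tsh : Module.End k (ZMod p → k) where
  toFun v := fun j => v (j + 1)
  map_add' _ _ := rfl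
  map_smul' _ _ := rfl

noncomputable def Nsh : Module.End k (ZMod p → k) := Tsh p k - 1

lemma Tsh_pow (m : ℕ) : ∀ (v : ZMod p → k) (j : ZMod p),
    (Tsh p k ^ m) v j = v (j + (m : ZMod p)) := by
  induction m with
  | zero => intro v j; simp
  | succ m ih =>
    intro v j
    rw [pow_succ]
    show (Tsh p k ^ m) (Tsh p k v) j = v (j + ((m + 1 : ℕ) : ZMod p))
    rw [ih]
    show v (j + (m : ZMod p) + 1) = _
    congr 1
    push_cast
    ring

lemma Tsh_pow_p : Tsh p k ^ p = 1 := by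
  apply LinearMap.ext
  intro v
  funext j
  rw [Tsh_pow]
  simp [ZMod.natCast_self]

lemma charP_End : CharP (Module.End k (ZMod p → k)) p := by
  have hinj : Function.Injective (algebraMap k (Module.End k (ZMod p → k))) := by
    intro a b h
    have h2 := congrFun (LinearMap.congr_fun h (fun _ => (1 : k))) 0
    simpa [Module.algebraMap_end_apply] using h2
  exact charP_of_injective_ringHom hinj p

lemma Nsh_pow_p : Nsh p k ^ p = 0 := by
  haveI := charP_End p k
  rw [Nsh, sub_pow_char_of_commute p (Commute.one_right (Tsh p k)), Tsh_pow_p, one_pow, sub_self]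

lemma finrank_ker_Nsh_le : Module.finrank k (LinearMap.ker (Nsh p k)) ≤ 1 := by
  have hle : LinearMap.ker (Nsh p k) ≤ Submodule.span k {(fun _ => 1 : ZMod p → k)} := by
    intro v hv
    rw [LinearMap.mem_ker] at hv
    have hstep : ∀ j : ZMod p, v (j + 1) = v j := by
      intro j
      have h2 := congrFun hv j
      simp only [Nsh, LinearMap.sub_apply, Module.End.one_apply, Pi.sub_apply,
        Pi.zero_apply] at h2
      exact sub_eq_zero.1 h2
    have hconst : ∀ n : ℕ, v ((n : ZMod p)) = v 0 := by
      intro n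
      induction n with
      | zero => norm_num
      | succ n ih => push_cast; rw [hstep ((n : ZMod p))]; exact ih
    rw [Submodule.mem_span_singleton]
    refine ⟨v 0, ?_⟩
    funext j
    show v 0 * 1 = v j
    rw [mul_one]
    conv_rhs => rw [show j = ((j.val : ℕ) : ZMod p) from (ZMod.natCast_rightInverse j).symm]
    rw [hconst]
  refine le_trans (Submodule.finrank_mono hle) ?_
  by_cases h : (fun _ => 1 : ZMod p → k) = 0
  · rw [h, Submodule.span_zero_singleton]
    simp
  · rw [finrank_span_singleton h]

lemma finrank_ker_pow_succ_le (j : ℕ) :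
    Module.finrank k (LinearMap.ker (Nsh p k ^ (j + 1)))
      ≤ Module.finrank k (LinearMap.ker (Nsh p k ^ j)) + 1 := by
  set K := LinearMap.ker (Nsh p k ^ (j + 1)) with hK
  set φ := (Nsh p k ^ j).domRestrict K with hφ
  have hrn := LinearMap.finrank_range_add_finrank_ker φ
  have hker : Module.finrank k (LinearMap.ker φ) ≤ Module.finrank k (LinearMap.ker (Nsh p k ^ j)) := by
    have hinj := Submodule.injective_subtype K
    have hm : (LinearMap.ker φ).map K.subtype ≤ LinearMap.ker (Nsh p k ^ j) := by
      rintro x ⟨y, hy, rfl⟩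
      exact LinearMap.mem_ker.2 (LinearMap.mem_ker.1 hy)
    calc Module.finrank k (LinearMap.ker φ)
        = Module.finrank k ((LinearMap.ker φ).map K.subtype) :=
          (Submodule.equivMapOfInjective _ hinj _).finrank_eq
      _ ≤ _ := Submodule.finrank_mono hm
  have hrange : Module.finrank k (LinearMap.range φ) ≤ 1 := by
    have hm : LinearMap.range φ ≤ LinearMap.ker (Nsh p k) := by
      rintro x ⟨y, rfl⟩
      rw [LinearMap.mem_ker]
      have h2 : (Nsh p k ^ (j + 1)) (y : ZMod p → k) = 0 := y.2
      rw [pow_succ'] at h2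
      exact h2
    exact le_trans (Submodule.finrank_mono hm) (finrank_ker_Nsh_le p k)
  omega

lemma finrank_V : Module.finrank k (ZMod p → k) = p := by
  rw [Module.finrank_pi, ZMod.card]

lemma finrank_ker_pow_p : Module.finrank k (LinearMap.ker (Nsh p k ^ p)) = p := by
  rw [Nsh_pow_p, LinearMap.ker_zero, finrank_top, finrank_V]

lemma finrank_ker_pow_le (j : ℕ) :
    Module.finrank k (LinearMap.ker (Nsh p k ^ j)) ≤ j := by
  induction j with
  | zero =>
    rw [pow_zero, Module.End.one_eq_id, LinearMap.ker_id]
    simp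
  | succ j ih => exact le_trans (finrank_ker_pow_succ_le p k j) (by omega)

lemma finrank_ker_pow_add_le (j d : ℕ) :
    Module.finrank k (LinearMap.ker (Nsh p k ^ (j + d)))
      ≤ Module.finrank k (LinearMap.ker (Nsh p k ^ j)) + d := by
  induction d with
  | zero => simp
  | succ d ih => exact le_trans (finrank_ker_pow_succ_le p k (j + d)) (by omega)

lemma finrank_ker_pow (j : ℕ) (hj : j ≤ p) :
    Module.finrank k (LinearMap.ker (Nsh p k ^ j)) = j := by
  have h1 := finrank_ker_pow_le p k j
  have h2 := finrank_ker_pow_add_le p k j (p - j)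
  rw [Nat.add_sub_cancel' hj, finrank_ker_pow_p] at h2
  omega

lemma ker_pow_mono {a b : ℕ} (hab : a ≤ b) :
    LinearMap.ker (Nsh p k ^ a) ≤ LinearMap.ker (Nsh p k ^ b) := by
  intro x hx
  rw [LinearMap.mem_ker] at hx ⊢
  rw [show Nsh p k ^ b = Nsh p k ^ (b - a) * Nsh p k ^ a by
    rw [← pow_add, Nat.sub_add_cancel hab]]
  show (Nsh p k ^ (b - a)) ((Nsh p k ^ a) x) = 0
  rw [hx, map_zero]

lemma stable_eq_ker (V' : Submodule k (ZMod p → k))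
    (hstab : ∀ v ∈ V', Tsh p k v ∈ V') :
    V' = LinearMap.ker (Nsh p k ^ Module.finrank k V') := by
  have hN : ∀ v ∈ V', Nsh p k v ∈ V' := fun v hv => by
    show Tsh p k v - v ∈ V'
    exact sub_mem (hstab v hv) hv
  set d := Module.finrank k V' with hd
  have hdp : d ≤ p := by
    have := Submodule.finrank_le V'
    rw [finrank_V p k] at this
    omega
  set N' : Module.End k V' := (Nsh p k).restrict hN with hN'
  have hco : ∀ (m : ℕ) (x : V'), ((N' ^ m) x : ZMod p → k) = (Nsh p k ^ m) (x : ZMod p → k) := by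
    intro m
    induction m with
    | zero => intro x; rfl
    | succ m ih =>
      intro x
      rw [pow_succ', pow_succ']
      show ((Nsh p k).restrict hN ((N' ^ m) x) : ZMod p → k)
        = Nsh p k ((Nsh p k ^ m) (x : ZMod p → k))
      rw [LinearMap.restrict_coe_apply, ih]
  have htop : ⊤ ≤ LinearMap.ker (N' ^ p) := by
    intro x _
    rw [LinearMap.mem_ker]
    apply Subtype.ext
    rw [hco p x, Nsh_pow_p]
    rfl
  have h2 : LinearMap.ker (N' ^ d) = ⊤ := by
    have := Module.End.ker_pow_le_ker_pow_finrank N' p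
    exact le_antisymm le_top (le_trans htop this)
  have hle : V' ≤ LinearMap.ker (Nsh p k ^ d) := by
    intro v hv
    rw [LinearMap.mem_ker]
    have hx : (N' ^ d) ⟨v, hv⟩ = 0 := by
      have hm : (⟨v, hv⟩ : V') ∈ LinearMap.ker (N' ^ d) := by rw [h2]; trivial
      exact LinearMap.mem_ker.1 hm
    have := congrArg (Subtype.val) hx
    rwa [hco d ⟨v, hv⟩] at this
  exact Submodule.eq_of_le_of_finrank_le hle (by rw [finrank_ker_pow p k d hdp])

end Shift

noncomputable def ev1 : (GL (Fin 2) ℤ_[p] → k) →ₗ[k] k where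
  toFun f := f 1
  map_add' _ _ := rfl
  map_smul' _ _ := rfl

noncomputable def Asub : Submodule k (GL (Fin 2) ℤ_[p] → k) :=
  IndK0 p k r ⊓ LinearMap.ker (ev1 p k)

lemma transl_mem (f : GL (Fin 2) ℤ_[p] → k) (hf : f ∈ IndK0 p k r) (g0 : GL (Fin 2) ℤ_[p]) :
    (fun x => f (x * g0)) ∈ IndK0 p k r := by
  rw [mem_IndK0_iff] at hf ⊢
  intro h g hh
  show f (h * g * g0) = _
  rw [mul_assoc]
  exact hf h (g * g0) hh

lemma Asub_transl (b : ℤ_[p]) (f : GL (Fin 2) ℤ_[p] → k) (hf : f ∈ Asub p k r) :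
    (fun x => f (x * uZ p b)) ∈ Asub p k r := by
  refine ⟨transl_mem p k r f hf.1 _, ?_⟩
  show f (1 * uZ p b) = 0
  rw [one_mul, ← mul_one (uZ p b),
    (mem_IndK0_iff p k r f).1 hf.1 _ _ (by rw [(uZ_entries p b).1, map_zero]),
    (uZ_entries p b).2, (res p).map_one, (φk p k).map_one, one_pow, one_mul]
  exact hf.2

lemma psi_inj_on_Asub (f : GL (Fin 2) ℤ_[p] → k) (hf : f ∈ Asub p k r)
    (h0 : Psi p k f = 0) : f = 0 := by
  refine eq_zero_of_psi p k r f hf.1 hf.2 (fun i => ?_)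
  exact congrFun h0 i

theorem indK0_restriction_U' (r : ℕ) (hr : r ≤ p - 1) :
    ∃ A B : Submodule k (GL (Fin 2) ℤ_[p] → k),
      A ⊔ B = IndK0 p k r ∧ A ⊓ B = ⊥ ∧
      (∀ b : ℤ_[p], ∀ f ∈ A, (fun x => f (x * uZ p b)) ∈ A) ∧
      (∀ b : ℤ_[p], ∀ f ∈ B, (fun x => f (x * uZ p b)) = f) ∧
      Module.finrank k B = 1 ∧ Module.finrank k A = p ∧
      (∀ W₁ W₂ : Submodule k (GL (Fin 2) ℤ_[p] → k), W₁ ≤ A → W₂ ≤ A →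
        (∀ b : ℤ_[p], ∀ f ∈ W₁, (fun x => f (x * uZ p b)) ∈ W₁) →
        (∀ b : ℤ_[p], ∀ f ∈ W₂, (fun x => f (x * uZ p b)) ∈ W₂) →
        W₁ ≤ W₂ ∨ W₂ ≤ W₁) := by
  classical
  refine ⟨Asub p k r, Submodule.span k {f0 p k r}, ?_, ?_, Asub_transl p k r, ?_, ?_, ?_, ?_⟩
  · apply le_antisymm
    · exact sup_le inf_le_left
        (Submodule.span_le.2 (Set.singleton_subset_iff.2 (f0_mem p k r)))
    · intro f hf
      have hmem : f - ev1 p k f • f0 p k r ∈ Asub p k r := by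
        refine ⟨sub_mem hf (Submodule.smul_mem _ _ (f0_mem p k r)), ?_⟩
        show ev1 p k (f - ev1 p k f • f0 p k r) = 0
        rw [map_sub]
        show ev1 p k f - ev1 p k f • f0 p k r 1 = 0
        rw [f0_one, smul_eq_mul, mul_one, sub_self]
      rw [show f = (f - ev1 p k f • f0 p k r) + ev1 p k f • f0 p k r by
        rw [sub_add_cancel]]
      exact Submodule.add_mem_sup hmem
        (Submodule.smul_mem _ _ (Submodule.mem_span_singleton_self _))
  · rw [eq_bot_iff]
    rintro f ⟨⟨_, hker⟩, hB⟩
    obtain ⟨a, rfl⟩ := Submodule.mem_span_singleton.1 hB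
    have hker' : ev1 p k (a • f0 p k r) = 0 := hker
    have ha : a = 0 := by
      have h2 : ev1 p k (a • f0 p k r) = a * f0 p k r 1 := rfl
      rw [hker', f0_one, mul_one] at h2
      exact h2.symm
    rw [ha, zero_smul]
    exact Submodule.zero_mem ⊥
  · intro b f hB
    obtain ⟨a, rfl⟩ := Submodule.mem_span_singleton.1 hB
    funext x
    show a • f0 p k r (x * uZ p b) = a • f0 p k r x
    rw [congrFun (f0_transl p k r b) x]
  · apply finrank_span_singleton
    intro h
    have := congrFun h 1
    rw [f0_one p k r] at this
    exact one_ne_zero this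
  · have hbij : Function.Bijective ((Psi p k).domRestrict (Asub p k r)) := by
      constructor
      · intro x y hxy
        apply Subtype.ext
        have hsub : (x : GL (Fin 2) ℤ_[p] → k) - y ∈ Asub p k r := sub_mem x.2 y.2
        have h0 : Psi p k ((x : GL (Fin 2) ℤ_[p] → k) - y) = 0 := by
          rw [map_sub, sub_eq_zero]; exact hxy
        exact sub_eq_zero.1 (psi_inj_on_Asub p k r _ hsub h0)
      · intro c
        exact ⟨⟨Ff p k r c, Ff_mem p k r c, Ff_one p k r c⟩, Psi_Ff p k r c⟩
    rw [(LinearEquiv.ofBijective _ hbij).finrank_eq, finrank_V]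
  · intro W₁ W₂ hW1A hW2A hs1 hs2
    have key : ∀ (W : Submodule k (GL (Fin 2) ℤ_[p] → k)), W ≤ Asub p k r →
        (∀ b : ℤ_[p], ∀ f ∈ W, (fun x => f (x * uZ p b)) ∈ W) →
        ∀ v ∈ W.map (Psi p k), Tsh p k v ∈ W.map (Psi p k) := by
      rintro W hWA hst v ⟨f, hf, rfl⟩
      have hfInd : f ∈ IndK0 p k r := (hWA hf).1
      have ht : Tsh p k (Psi p k f) = Psi p k (fun x => f (x * uZ p 1)) := by
        rw [Psi_transl p k r f hfInd 1, (res p).map_one]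
        rfl
      rw [ht]
      exact ⟨_, hst 1 f hf, rfl⟩
    have h1 := stable_eq_ker p k (W₁.map (Psi p k)) (key W₁ hW1A hs1)
    have h2 := stable_eq_ker p k (W₂.map (Psi p k)) (key W₂ hW2A hs2)
    have pull : ∀ (Wa Wb : Submodule k (GL (Fin 2) ℤ_[p] → k)), Wa ≤ Asub p k r →
        Wb ≤ Asub p k r → Wa.map (Psi p k) ≤ Wb.map (Psi p k) → Wa ≤ Wb := by
      intro Wa Wb ha hb hmap f hf
      obtain ⟨g, hg, hgf⟩ := hmap ⟨f, hf, rfl⟩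
      have hsub : f - g ∈ Asub p k r := sub_mem (ha hf) (hb hg)
      have h0 : Psi p k (f - g) = 0 := by rw [map_sub, hgf, sub_self]
      have := sub_eq_zero.1 (psi_inj_on_Asub p k r _ hsub h0)
      rw [this]
      exact hg
    rcases le_total (Module.finrank k (W₁.map (Psi p k)))
        (Module.finrank k (W₂.map (Psi p k))) with h | h
    · exact Or.inl (pull _ _ hW1A hW2A (by rw [h1, h2]; exact ker_pow_mono p k h))
    · exact Or.inr (pull _ _ hW2A hW1A (by rw [h1, h2]; exact ker_pow_mono p k h))


/-- The restriction to `U(ℤ_p)` of `Ind_{K₀(p)}^{GL₂(ℤ_p)}(χ_rˢ)` decomposes as `ρ ⊕ 1`,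
where `1` is the trivial character and `ρ` is a `p`-dimensional uniserial representation of
`U(ℤ_p)`. -/
theorem indK0_restriction_U (p : ℕ) [Fact p.Prime]
    (k : Type) [Field k] [IsAlgClosed k] [CharP k p] (r : ℕ) (hr : r ≤ p - 1) :
    ∃ A B : Submodule k (GL (Fin 2) ℤ_[p] → k),
      A ⊔ B = IndK0 p k r ∧ A ⊓ B = ⊥ ∧
      (∀ b : ℤ_[p], ∀ f ∈ A, (fun x => f (x * uZ p b)) ∈ A) ∧
      (∀ b : ℤ_[p], ∀ f ∈ B, (fun x => f (x * uZ p b)) = f) ∧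
      Module.finrank k B = 1 ∧ Module.finrank k A = p ∧
      (∀ W₁ W₂ : Submodule k (GL (Fin 2) ℤ_[p] → k), W₁ ≤ A → W₂ ≤ A →
        (∀ b : ℤ_[p], ∀ f ∈ W₁, (fun x => f (x * uZ p b)) ∈ W₁) →
        (∀ b : ℤ_[p], ∀ f ∈ W₂, (fun x => f (x * uZ p b)) ∈ W₂) →
        W₁ ≤ W₂ ∨ W₂ ≤ W₁) := by
  exact indK0_restriction_U' p k r hr
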